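/- Let g₁ = ∏_{i∈σ₁}xᵢ·∏_{i∈τ₁}(1−xᵢ) and g₂ = ∏_{i∈σ₂}xᵢ·∏_{i∈τ₂}(1−xᵢ) be pseudomonomials with σ₁, τ₁, σ₂, τ₂ ⊆ {2,…,n}, such that g₁ and g₂ share no index, and let J be the ideal of R generated by x₁·g₁ and (1−x₁)·g₂. Then: (a) if [g₁g₂] ≠ g₁ and [g₁g₂] ≠ g₂, then CF(J) = {x₁g₁, (1−x₁)g₂, [g₁g₂]}; (b) if [g₁g₂] = g₂ ≠ g₁, then CF(J) = {x₁g₁, g₂}; (c) if [g₁g₂] = g₁ ≠ g₂, then CF(J) = {g₁, (1−x₁)g₂}; (d) if g₁ = g₂, then CF(J) = {g₁}. In every case {x₁g₁, (1−x₁)g₂} ≠ CF(J), i.e., the given presentation of J is not in canonical form. -/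
import Mathlib


open MvPolynomial

/-- The pseudomonomial `∏_{i∈σ} xᵢ · ∏_{i∈τ} (1 - xᵢ)` in `F₂[x₁,…,xₙ]`. -/
noncomputable def psm (n : ℕ) (σ τ : Finset (Fin n)) : MvPolynomial (Fin n) (ZMod 2) :=
  (∏ i ∈ σ, X i) * ∏ i ∈ τ, (1 - X i)

/-- A polynomial of `F₂[x₁,…,xₙ]` is a pseudomonomial if it has the form
`∏_{i∈σ} xᵢ · ∏_{i∈τ} (1 - xᵢ)` for disjoint `σ τ`. -/
def IsPseudomonomial {n : ℕ} (f : MvPolynomial (Fin n) (ZMod 2)) : Prop :=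
  ∃ σ τ : Finset (Fin n), Disjoint σ τ ∧ f = psm n σ τ

/-- The canonical form of an ideal `J`: the set of minimal pseudomonomials of `J`,
i.e. pseudomonomials `f ∈ J` such that no pseudomonomial `g ≠ f` dividing `f` lies in `J`. -/
def CF {n : ℕ} (J : Ideal (MvPolynomial (Fin n) (ZMod 2))) :
    Set (MvPolynomial (Fin n) (ZMod 2)) :=
  {f | IsPseudomonomial f ∧ f ∈ J ∧
    ∀ g : MvPolynomial (Fin n) (ZMod 2), IsPseudomonomial g → g ∣ f → g ≠ f → g ∉ J}
variable {n : ℕ}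

lemma eval_psm (p : Fin n → ZMod 2) (σ τ : Finset (Fin n)) :
    eval p (psm n σ τ) = (∏ i ∈ σ, p i) * ∏ i ∈ τ, (1 - p i) := by
  simp [psm]

lemma eval_psm_one {σ τ : Finset (Fin n)} (p : Fin n → ZMod 2)
    (h1 : ∀ i ∈ σ, p i = 1) (h0 : ∀ i ∈ τ, p i = 0) :
    eval p (psm n σ τ) = 1 := by
  rw [eval_psm]
  rw [Finset.prod_eq_one h1, Finset.prod_eq_one (fun i hi => by rw [h0 i hi]; ring), one_mul]

lemma psm_dvd_psm {σ' τ' σ τ : Finset (Fin n)} (hσ : σ' ⊆ σ) (hτ : τ' ⊆ τ) :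
    psm n σ' τ' ∣ psm n σ τ :=
  mul_dvd_mul (Finset.prod_dvd_prod_of_subset _ _ _ hσ) (Finset.prod_dvd_prod_of_subset _ _ _ hτ)

lemma subset_of_psm_dvd {σ' τ' σ τ : Finset (Fin n)} (hd : Disjoint σ τ)
    (h : psm n σ' τ' ∣ psm n σ τ) : σ' ⊆ σ ∧ τ' ⊆ τ := by
  have hdisj := Finset.disjoint_left.mp hd
  constructor
  · intro i hi
    by_contra hiσ
    set p : Fin n → ZMod 2 := fun j => if j ∈ σ then 1 else 0 with hp
    have h2 := map_dvd (eval p) h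
    have hr : eval p (psm n σ τ) = 1 :=
      eval_psm_one p (fun j hj => if_pos hj) (fun j hj => if_neg (fun hjs => hdisj hjs hj))
    have hl : eval p (psm n σ' τ') = 0 := by
      rw [eval_psm]
      rw [Finset.prod_eq_zero hi (by simp [hp, hiσ]), zero_mul]
    rw [hl, hr, zero_dvd_iff] at h2
    exact one_ne_zero h2
  · intro i hi
    by_contra hiτ
    set p : Fin n → ZMod 2 := fun j => if j ∈ insert i σ then 1 else 0 with hp
    have h2 := map_dvd (eval p) h
    have hr : eval p (psm n σ τ) = 1 :=
      eval_psm_one p (fun j hj => if_pos (Finset.mem_insert_of_mem hj))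
        (fun j hj => if_neg (by
          simp only [Finset.mem_insert]
          rintro (rfl | hjs)
          · exact hiτ hj
          · exact hdisj hjs hj))
    have hl : eval p (psm n σ' τ') = 0 := by
      rw [eval_psm]
      rw [Finset.prod_eq_zero (f := fun j => 1 - p j) hi (by simp [hp]), mul_zero]
    rw [hl, hr, zero_dvd_iff] at h2
    exact one_ne_zero h2

lemma psm_inj {σ' τ' σ τ : Finset (Fin n)} (hd' : Disjoint σ' τ') (hd : Disjoint σ τ)
    (h : psm n σ' τ' = psm n σ τ) : σ' = σ ∧ τ' = τ := by
  obtain ⟨h1, h2⟩ := subset_of_psm_dvd hd (dvd_of_eq h)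
  obtain ⟨h3, h4⟩ := subset_of_psm_dvd hd' (dvd_of_eq h.symm)
  exact ⟨subset_antisymm h1 h3, subset_antisymm h2 h4⟩

lemma psm_insert_left {σ τ : Finset (Fin n)} {a : Fin n} (h : a ∉ σ) :
    psm n (insert a σ) τ = X a * psm n σ τ := by
  rw [psm, psm, Finset.prod_insert h]; ring

lemma psm_insert_right {σ τ : Finset (Fin n)} {a : Fin n} (h : a ∉ τ) :
    psm n σ (insert a τ) = (1 - X a) * psm n σ τ := by
  rw [psm, psm, Finset.prod_insert h]; ring

lemma psm_erase_left {σ τ : Finset (Fin n)} {a : Fin n} (h : a ∈ σ) :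
    psm n σ τ = X a * psm n (σ.erase a) τ := by
  rw [← psm_insert_left (Finset.notMem_erase a σ), Finset.insert_erase h]

lemma psm_erase_right {σ τ : Finset (Fin n)} {a : Fin n} (h : a ∈ τ) :
    psm n σ τ = (1 - X a) * psm n σ (τ.erase a) := by
  rw [← psm_insert_right (Finset.notMem_erase a τ), Finset.insert_erase h]

lemma aeval_psm_eq {σ τ : Finset (Fin n)} (a : Fin n) (b : MvPolynomial (Fin n) (ZMod 2))
    (hσ : a ∉ σ) (hτ : a ∉ τ) :
    aeval (fun i => if i = a then b else X i) (psm n σ τ) = psm n σ τ := by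
  rw [psm, map_mul, map_prod, map_prod]
  congr 1
  · exact Finset.prod_congr rfl fun i hi => by
      rw [aeval_X, if_neg (fun h : i = a => hσ (h ▸ hi))]
  · exact Finset.prod_congr rfl fun i hi => by
      rw [map_sub, map_one, aeval_X, if_neg (fun h : i = a => hτ (h ▸ hi))]

lemma mem_span_psm (x₀ : Fin n) {σ₁ τ₁ σ₂ τ₂ σ τ : Finset (Fin n)}
    (hd1 : Disjoint σ₁ τ₁) (hd2 : Disjoint σ₂ τ₂) (hd : Disjoint σ τ)
    (h01 : x₀ ∉ σ₁) (h02 : x₀ ∉ τ₁) (h03 : x₀ ∉ σ₂) (h04 : x₀ ∉ τ₂)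
    (hmem : psm n σ τ ∈
      Ideal.span {X x₀ * psm n σ₁ τ₁, (1 - X x₀) * psm n σ₂ τ₂}) :
    (insert x₀ σ₁ ⊆ σ ∧ τ₁ ⊆ τ) ∨ (σ₂ ⊆ σ ∧ insert x₀ τ₂ ⊆ τ) ∨
    (σ₁ ∪ σ₂ ⊆ σ ∧ τ₁ ∪ τ₂ ⊆ τ) := by
  obtain ⟨c, d, hcd⟩ := Ideal.mem_span_pair.mp hmem
  set φ₁ := aeval (R := ZMod 2) (fun i : Fin n => if i = x₀ then (1 : MvPolynomial (Fin n) (ZMod 2)) else X i) with hφ₁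
  set φ₀ := aeval (R := ZMod 2) (fun i : Fin n => if i = x₀ then (0 : MvPolynomial (Fin n) (ZMod 2)) else X i) with hφ₀
  have hX1 : φ₁ (X x₀) = 1 := by rw [hφ₁, aeval_X, if_pos rfl]
  have hX0 : φ₀ (X x₀) = 0 := by rw [hφ₀, aeval_X, if_pos rfl]
  have e1 : φ₁ (psm n σ τ) = φ₁ c * psm n σ₁ τ₁ := by
    rw [← hcd]
    simp only [map_add, map_mul, map_sub, map_one, hX1]
    rw [hφ₁, aeval_psm_eq x₀ _ h01 h02, aeval_psm_eq x₀ _ h03 h04]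
    ring
  have e0 : φ₀ (psm n σ τ) = φ₀ d * psm n σ₂ τ₂ := by
    rw [← hcd]
    simp only [map_add, map_mul, map_sub, map_one, hX0]
    rw [hφ₀, aeval_psm_eq x₀ _ h01 h02, aeval_psm_eq x₀ _ h03 h04]
    ring
  by_cases h0σ : x₀ ∈ σ
  · left
    have h0τ : x₀ ∉ τ := Finset.disjoint_left.mp hd h0σ
    have hf : psm n σ τ = X x₀ * psm n (σ.erase x₀) τ := psm_erase_left h0σ
    have : φ₁ (psm n σ τ) = psm n (σ.erase x₀) τ := by
      rw [hf, map_mul, hX1, one_mul, hφ₁,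
        aeval_psm_eq x₀ _ (Finset.notMem_erase x₀ σ) h0τ]
    have hdvd : psm n σ₁ τ₁ ∣ psm n (σ.erase x₀) τ := ⟨φ₁ c, by rw [← this, e1]; ring⟩
    obtain ⟨hs, ht⟩ := subset_of_psm_dvd (hd.mono_left (Finset.erase_subset _ _)) hdvd
    exact ⟨Finset.insert_subset h0σ (hs.trans (Finset.erase_subset _ _)), ht⟩
  · by_cases h0τ : x₀ ∈ τ
    · right; left
      have hf : psm n σ τ = (1 - X x₀) * psm n σ (τ.erase x₀) := psm_erase_right h0τ
      have : φ₀ (psm n σ τ) = psm n σ (τ.erase x₀) := by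
        rw [hf, map_mul, map_sub, map_one, hX0, sub_zero, one_mul, hφ₀,
          aeval_psm_eq x₀ _ h0σ (Finset.notMem_erase x₀ τ)]
      have hdvd : psm n σ₂ τ₂ ∣ psm n σ (τ.erase x₀) := ⟨φ₀ d, by rw [← this, e0]; ring⟩
      obtain ⟨hs, ht⟩ := subset_of_psm_dvd (hd.mono_right (Finset.erase_subset _ _)) hdvd
      exact ⟨hs, Finset.insert_subset h0τ (ht.trans (Finset.erase_subset _ _))⟩
    · right; right
      have hfix1 : φ₁ (psm n σ τ) = psm n σ τ := by
        rw [hφ₁, aeval_psm_eq x₀ _ h0σ h0τ]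
      have hfix0 : φ₀ (psm n σ τ) = psm n σ τ := by
        rw [hφ₀, aeval_psm_eq x₀ _ h0σ h0τ]
      have hdvd1 : psm n σ₁ τ₁ ∣ psm n σ τ := ⟨φ₁ c, by rw [← hfix1, e1]; ring⟩
      have hdvd0 : psm n σ₂ τ₂ ∣ psm n σ τ := ⟨φ₀ d, by rw [← hfix0, e0]; ring⟩
      obtain ⟨hs1, ht1⟩ := subset_of_psm_dvd hd hdvd1
      obtain ⟨hs2, ht2⟩ := subset_of_psm_dvd hd hdvd0
      exact ⟨Finset.union_subset hs1 hs2, Finset.union_subset ht1 ht2⟩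

/-- Theorem 5.2(4): the canonical form of `(x₁g₁, (1-x₁)g₂)` where `g₁, g₂` avoid index 1 and
share no index, in all four cases; in every case the given presentation is not canonical. -/
theorem stmt5 {n : ℕ} (hn : 0 < n)
    (σ₁ τ₁ σ₂ τ₂ : Finset (Fin n))
    (hd1 : Disjoint σ₁ τ₁) (hd2 : Disjoint σ₂ τ₂)
    (hhigh : ∀ i ∈ σ₁ ∪ τ₁ ∪ σ₂ ∪ τ₂, 1 ≤ (i : ℕ))
    (hshare : ∀ i : Fin n, i ∉ (σ₁ ∩ τ₂) ∪ (σ₂ ∩ τ₁))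
    (g₁ g₂ G : MvPolynomial (Fin n) (ZMod 2))
    (hg₁ : g₁ = psm n σ₁ τ₁) (hg₂ : g₂ = psm n σ₂ τ₂)
    (hG : G = psm n (σ₁ ∪ σ₂) (τ₁ ∪ τ₂))
    (J : Ideal (MvPolynomial (Fin n) (ZMod 2)))
    (hJ : J = Ideal.span {X (⟨0, hn⟩ : Fin n) * g₁, (1 - X (⟨0, hn⟩ : Fin n)) * g₂}) :
    ((G ≠ g₁ ∧ G ≠ g₂) →
      CF J = {X (⟨0, hn⟩ : Fin n) * g₁, (1 - X (⟨0, hn⟩ : Fin n)) * g₂, G}) ∧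
    ((G = g₂ ∧ g₂ ≠ g₁) → CF J = {X (⟨0, hn⟩ : Fin n) * g₁, g₂}) ∧
    ((G = g₁ ∧ g₁ ≠ g₂) → CF J = {g₁, (1 - X (⟨0, hn⟩ : Fin n)) * g₂}) ∧
    (g₁ = g₂ → CF J = {g₁}) ∧
    ({X (⟨0, hn⟩ : Fin n) * g₁, (1 - X (⟨0, hn⟩ : Fin n)) * g₂} :
      Set (MvPolynomial (Fin n) (ZMod 2))) ≠ CF J := by
  set x : Fin n := ⟨0, hn⟩ with hx
  have hne0 : ∀ i ∈ σ₁ ∪ τ₁ ∪ σ₂ ∪ τ₂, i ≠ x := by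
    intro i hi h
    have := hhigh i hi
    rw [h, hx] at this
    simp at this
  have h01 : x ∉ σ₁ := fun h => hne0 x (by simp [Finset.mem_union, h]) rfl
  have h02 : x ∉ τ₁ := fun h => hne0 x (by simp [Finset.mem_union, h]) rfl
  have h03 : x ∉ σ₂ := fun h => hne0 x (by simp [Finset.mem_union, h]) rfl
  have h04 : x ∉ τ₂ := fun h => hne0 x (by simp [Finset.mem_union, h]) rfl
  have hd12 : Disjoint σ₁ τ₂ := Finset.disjoint_left.mpr
    (fun {i} h1 h2 => hshare i (by simp [Finset.mem_union, Finset.mem_inter, h1, h2]))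
  have hd21 : Disjoint σ₂ τ₁ := Finset.disjoint_left.mpr
    (fun {i} h1 h2 => hshare i (by simp [Finset.mem_union, Finset.mem_inter, h1, h2]))
  have hdG : Disjoint (σ₁ ∪ σ₂) (τ₁ ∪ τ₂) :=
    Finset.disjoint_union_left.mpr ⟨Finset.disjoint_union_right.mpr ⟨hd1, hd12⟩,
      Finset.disjoint_union_right.mpr ⟨hd21, hd2⟩⟩
  have hA : X x * g₁ = psm n (insert x σ₁) τ₁ := by rw [hg₁, psm_insert_left h01]
  have hB : (1 - X x) * g₂ = psm n σ₂ (insert x τ₂) := by rw [hg₂, psm_insert_right h04]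
  have hdA : Disjoint (insert x σ₁) τ₁ := Finset.disjoint_insert_left.mpr ⟨h02, hd1⟩
  have hdB : Disjoint σ₂ (insert x τ₂) := Finset.disjoint_insert_right.mpr ⟨h03, hd2⟩
  have isA : IsPseudomonomial (X x * g₁) := ⟨_, _, hdA, hA⟩
  have isB : IsPseudomonomial ((1 - X x) * g₂) := ⟨_, _, hdB, hB⟩
  have isG : IsPseudomonomial G := ⟨_, _, hdG, hG⟩
  have isg₁ : IsPseudomonomial g₁ := ⟨_, _, hd1, hg₁⟩
  have isg₂ : IsPseudomonomial g₂ := ⟨_, _, hd2, hg₂⟩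
  have memA : X x * g₁ ∈ J := by
    rw [hJ]; exact Ideal.subset_span (by left; rfl)
  have memB : (1 - X x) * g₂ ∈ J := by
    rw [hJ]; exact Ideal.subset_span (by right; rfl)
  have memJ_of_dvd : ∀ {u f : MvPolynomial (Fin n) (ZMod 2)}, u ∈ J → u ∣ f → f ∈ J := by
    rintro u f hu ⟨c, rfl⟩
    exact Ideal.mul_mem_right _ _ hu
  have hg1G : g₁ ∣ G := by
    rw [hg₁, hG]; exact psm_dvd_psm Finset.subset_union_left Finset.subset_union_left
  have hg2G : g₂ ∣ G := by
    rw [hg₂, hG]; exact psm_dvd_psm Finset.subset_union_right Finset.subset_union_right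
  have hGJ : G ∈ J := by
    obtain ⟨c1, hc1⟩ := hg1G
    obtain ⟨c2, hc2⟩ := hg2G
    rw [hJ, Ideal.mem_span_pair]
    refine ⟨c1, c2, ?_⟩
    rw [show c1 * (X x * g₁) = X x * (g₁ * c1) from by ring,
      show c2 * ((1 - X x) * g₂) = (1 - X x) * (g₂ * c2) from by ring, ← hc1, ← hc2]
    ring
  have key : ∀ {σ τ : Finset (Fin n)}, Disjoint σ τ → psm n σ τ ∈ J →
      (insert x σ₁ ⊆ σ ∧ τ₁ ⊆ τ) ∨ (σ₂ ⊆ σ ∧ insert x τ₂ ⊆ τ) ∨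
      (σ₁ ∪ σ₂ ⊆ σ ∧ τ₁ ∪ τ₂ ⊆ τ) := by
    intro σ τ hd hmem
    rw [hJ, hg₁, hg₂] at hmem
    exact mem_span_psm x hd1 hd2 hd h01 h02 h03 h04 hmem
  have cf_of : ∀ {σ τ : Finset (Fin n)}, Disjoint σ τ → psm n σ τ ∈ J →
      (∀ σ' τ' : Finset (Fin n), Disjoint σ' τ' → σ' ⊆ σ → τ' ⊆ τ → psm n σ' τ' ∈ J →
        σ' = σ ∧ τ' = τ) →
      psm n σ τ ∈ CF J := by
    intro σ τ hd hmem hmin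
    refine ⟨⟨σ, τ, hd, rfl⟩, hmem, ?_⟩
    rintro g ⟨σ', τ', hd', rfl⟩ hdvd hne hgJ
    obtain ⟨hs, ht⟩ := subset_of_psm_dvd hd hdvd
    obtain ⟨rfl, rfl⟩ := hmin σ' τ' hd' hs ht hgJ
    exact hne rfl
  have cf_elim : ∀ f ∈ CF J, ∀ u : MvPolynomial (Fin n) (ZMod 2),
      IsPseudomonomial u → u ∈ J → u ∣ f → f = u := by
    intro f hf u hu huJ hdvd
    by_contra hne
    exact hf.2.2 u hu hdvd (fun h => hne h.symm) huJ
  -- part (a)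
  have pa : (G ≠ g₁ ∧ G ≠ g₂) →
      CF J = {X x * g₁, (1 - X x) * g₂, G} := by
    rintro ⟨hGa, hGb⟩
    ext f
    simp only [Set.mem_insert_iff, Set.mem_singleton_iff]
    constructor
    · intro hf
      obtain ⟨σ, τ, hd, rfl⟩ := hf.1
      rcases key hd hf.2.1 with ⟨hs, ht⟩ | ⟨hs, ht⟩ | ⟨hs, ht⟩
      · exact Or.inl (cf_elim _ hf _ isA memA (by rw [hA]; exact psm_dvd_psm hs ht))
      · exact Or.inr (Or.inl (cf_elim _ hf _ isB memB (by rw [hB]; exact psm_dvd_psm hs ht)))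
      · exact Or.inr (Or.inr (cf_elim _ hf _ isG hGJ (by rw [hG]; exact psm_dvd_psm hs ht)))
    · rintro (rfl | rfl | rfl)
      · rw [hA]
        refine cf_of hdA (by rw [← hA]; exact memA) ?_
        intro σ' τ' hd' hs ht hmemJ
        rcases key hd' hmemJ with ⟨h1, h2⟩ | ⟨h1, h2⟩ | ⟨h1, h2⟩
        · exact ⟨subset_antisymm hs h1, subset_antisymm ht h2⟩
        · exact absurd (ht (h2 (Finset.mem_insert_self x τ₂))) h02
        · exfalso
          have hs2 : σ₂ ⊆ σ₁ := by
            intro i hi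
            rcases Finset.mem_insert.mp (hs (h1 (Finset.mem_union_right _ hi))) with h | h
            · exact absurd (h ▸ hi) h03
            · exact h
          have ht2 : τ₂ ⊆ τ₁ := fun i hi => ht (h2 (Finset.mem_union_right _ hi))
          exact hGa (by
            rw [hG, hg₁, Finset.union_eq_left.mpr hs2, Finset.union_eq_left.mpr ht2])
      · rw [hB]
        refine cf_of hdB (by rw [← hB]; exact memB) ?_
        intro σ' τ' hd' hs ht hmemJ
        rcases key hd' hmemJ with ⟨h1, h2⟩ | ⟨h1, h2⟩ | ⟨h1, h2⟩
        · exact absurd (hs (h1 (Finset.mem_insert_self x σ₁))) h03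
        · exact ⟨subset_antisymm hs h1, subset_antisymm ht h2⟩
        · exfalso
          have ht1 : τ₁ ⊆ τ₂ := by
            intro i hi
            rcases Finset.mem_insert.mp (ht (h2 (Finset.mem_union_left _ hi))) with h | h
            · exact absurd (h ▸ hi) h02
            · exact h
          have hs1 : σ₁ ⊆ σ₂ := fun i hi => hs (h1 (Finset.mem_union_left _ hi))
          exact hGb (by
            rw [hG, hg₂, Finset.union_eq_right.mpr hs1, Finset.union_eq_right.mpr ht1])
      · rw [hG]
        refine cf_of hdG (by rw [← hG]; exact hGJ) ?_
        intro σ' τ' hd' hs ht hmemJ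
        rcases key hd' hmemJ with ⟨h1, h2⟩ | ⟨h1, h2⟩ | ⟨h1, h2⟩
        · rcases Finset.mem_union.mp (hs (h1 (Finset.mem_insert_self x σ₁))) with h | h
          · exact absurd h h01
          · exact absurd h h03
        · rcases Finset.mem_union.mp (ht (h2 (Finset.mem_insert_self x τ₂))) with h | h
          · exact absurd h h02
          · exact absurd h h04
        · exact ⟨subset_antisymm hs h1, subset_antisymm ht h2⟩
  -- part (b)
  have pb : (G = g₂ ∧ g₂ ≠ g₁) → CF J = {X x * g₁, g₂} := by
    rintro ⟨hGe, hne21⟩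
    have hpe : psm n (σ₁ ∪ σ₂) (τ₁ ∪ τ₂) = psm n σ₂ τ₂ := by rw [← hG, ← hg₂, hGe]
    obtain ⟨hse, hte⟩ := psm_inj hdG hd2 hpe
    have hs12 : σ₁ ⊆ σ₂ := Finset.union_eq_right.mp hse
    have ht12 : τ₁ ⊆ τ₂ := Finset.union_eq_right.mp hte
    have memg₂ : g₂ ∈ J := hGe ▸ hGJ
    ext f
    simp only [Set.mem_insert_iff, Set.mem_singleton_iff]
    constructor
    · intro hf
      obtain ⟨σ, τ, hd, rfl⟩ := hf.1
      rcases key hd hf.2.1 with ⟨hs, ht⟩ | ⟨hs, ht⟩ | ⟨hs, ht⟩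
      · exact Or.inl (cf_elim _ hf _ isA memA (by rw [hA]; exact psm_dvd_psm hs ht))
      · exact Or.inr (cf_elim _ hf _ isg₂ memg₂ (by
          rw [hg₂]
          exact psm_dvd_psm hs ((Finset.subset_insert x τ₂).trans ht)))
      · exact Or.inr (cf_elim _ hf _ isg₂ memg₂ (by
          rw [hg₂]
          exact psm_dvd_psm ((Finset.subset_union_right).trans hs)
            ((Finset.subset_union_right).trans ht)))
    · rintro (rfl | rfl)
      · rw [hA]
        refine cf_of hdA (by rw [← hA]; exact memA) ?_
        intro σ' τ' hd' hs ht hmemJ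
        rcases key hd' hmemJ with ⟨h1, h2⟩ | ⟨h1, h2⟩ | ⟨h1, h2⟩
        · exact ⟨subset_antisymm hs h1, subset_antisymm ht h2⟩
        · exact absurd (ht (h2 (Finset.mem_insert_self x τ₂))) h02
        · exfalso
          have hs2 : σ₂ ⊆ σ₁ := by
            intro i hi
            rcases Finset.mem_insert.mp (hs (h1 (Finset.mem_union_right _ hi))) with h | h
            · exact absurd (h ▸ hi) h03
            · exact h
          have ht2 : τ₂ ⊆ τ₁ := fun i hi => ht (h2 (Finset.mem_union_right _ hi))
          exact hne21 (by
            rw [hg₁, hg₂, subset_antisymm hs2 hs12, subset_antisymm ht2 ht12])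
      · rw [hg₂]
        refine cf_of hd2 (by rw [← hg₂]; exact memg₂) ?_
        intro σ' τ' hd' hs ht hmemJ
        rcases key hd' hmemJ with ⟨h1, h2⟩ | ⟨h1, h2⟩ | ⟨h1, h2⟩
        · exact absurd (hs (h1 (Finset.mem_insert_self x σ₁))) h03
        · exact absurd (ht (h2 (Finset.mem_insert_self x τ₂))) h04
        · exact ⟨subset_antisymm hs ((Finset.subset_union_right).trans h1),
            subset_antisymm ht ((Finset.subset_union_right).trans h2)⟩
  -- part (c)
  have pc : (G = g₁ ∧ g₁ ≠ g₂) → CF J = {g₁, (1 - X x) * g₂} := by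
    rintro ⟨hGe, hne12⟩
    have hpe : psm n (σ₁ ∪ σ₂) (τ₁ ∪ τ₂) = psm n σ₁ τ₁ := by rw [← hG, ← hg₁, hGe]
    obtain ⟨hse, hte⟩ := psm_inj hdG hd1 hpe
    have hs21 : σ₂ ⊆ σ₁ := Finset.union_eq_left.mp hse
    have ht21 : τ₂ ⊆ τ₁ := Finset.union_eq_left.mp hte
    have memg₁ : g₁ ∈ J := hGe ▸ hGJ
    ext f
    simp only [Set.mem_insert_iff, Set.mem_singleton_iff]
    constructor
    · intro hf
      obtain ⟨σ, τ, hd, rfl⟩ := hf.1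
      rcases key hd hf.2.1 with ⟨hs, ht⟩ | ⟨hs, ht⟩ | ⟨hs, ht⟩
      · exact Or.inl (cf_elim _ hf _ isg₁ memg₁ (by
          rw [hg₁]
          exact psm_dvd_psm ((Finset.subset_insert x σ₁).trans hs) ht))
      · exact Or.inr (cf_elim _ hf _ isB memB (by rw [hB]; exact psm_dvd_psm hs ht))
      · exact Or.inl (cf_elim _ hf _ isg₁ memg₁ (by
          rw [hg₁]
          exact psm_dvd_psm ((Finset.subset_union_left).trans hs)
            ((Finset.subset_union_left).trans ht)))
    · rintro (rfl | rfl)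
      · rw [hg₁]
        refine cf_of hd1 (by rw [← hg₁]; exact memg₁) ?_
        intro σ' τ' hd' hs ht hmemJ
        rcases key hd' hmemJ with ⟨h1, h2⟩ | ⟨h1, h2⟩ | ⟨h1, h2⟩
        · exact absurd (hs (h1 (Finset.mem_insert_self x σ₁))) h01
        · exact absurd (ht (h2 (Finset.mem_insert_self x τ₂))) h02
        · exact ⟨subset_antisymm hs ((Finset.subset_union_left).trans h1),
            subset_antisymm ht ((Finset.subset_union_left).trans h2)⟩
      · rw [hB]
        refine cf_of hdB (by rw [← hB]; exact memB) ?_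
        intro σ' τ' hd' hs ht hmemJ
        rcases key hd' hmemJ with ⟨h1, h2⟩ | ⟨h1, h2⟩ | ⟨h1, h2⟩
        · exact absurd (hs (h1 (Finset.mem_insert_self x σ₁))) h03
        · exact ⟨subset_antisymm hs h1, subset_antisymm ht h2⟩
        · exfalso
          have ht1 : τ₁ ⊆ τ₂ := by
            intro i hi
            rcases Finset.mem_insert.mp (ht (h2 (Finset.mem_union_left _ hi))) with h | h
            · exact absurd (h ▸ hi) h02
            · exact h
          have hs1 : σ₁ ⊆ σ₂ := fun i hi => hs (h1 (Finset.mem_union_left _ hi))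
          exact hne12 (by
            rw [hg₁, hg₂, subset_antisymm hs1 hs21, subset_antisymm ht1 ht21])
  -- part (d)
  have pd : g₁ = g₂ → CF J = {g₁} := by
    intro heq
    have hpe : psm n σ₁ τ₁ = psm n σ₂ τ₂ := by rw [← hg₁, ← hg₂, heq]
    obtain ⟨hse, hte⟩ := psm_inj hd1 hd2 hpe
    have hGe : G = g₁ := by
      rw [hG, hg₁, ← hse, ← hte, Finset.union_self, Finset.union_self]
    have memg₁ : g₁ ∈ J := hGe ▸ hGJ
    ext f
    simp only [Set.mem_singleton_iff]
    constructor
    · intro hf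
      obtain ⟨σ, τ, hd, rfl⟩ := hf.1
      rcases key hd hf.2.1 with ⟨hs, ht⟩ | ⟨hs, ht⟩ | ⟨hs, ht⟩
      · exact cf_elim _ hf _ isg₁ memg₁ (by
          rw [hg₁]; exact psm_dvd_psm ((Finset.subset_insert x σ₁).trans hs) ht)
      · exact cf_elim _ hf _ isg₁ memg₁ (by
          rw [hg₁, hse, hte]
          exact psm_dvd_psm hs ((Finset.subset_insert x τ₂).trans ht))
      · exact cf_elim _ hf _ isg₁ memg₁ (by
          rw [hg₁]
          exact psm_dvd_psm ((Finset.subset_union_left).trans hs)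
            ((Finset.subset_union_left).trans ht))
    · rintro rfl
      rw [hg₁]
      refine cf_of hd1 (by rw [← hg₁]; exact memg₁) ?_
      intro σ' τ' hd' hs ht hmemJ
      rcases key hd' hmemJ with ⟨h1, h2⟩ | ⟨h1, h2⟩ | ⟨h1, h2⟩
      · exact absurd (hs (h1 (Finset.mem_insert_self x σ₁))) h01
      · exact absurd (ht (h2 (Finset.mem_insert_self x τ₂)) : x ∈ τ₁) h02
      · exact ⟨subset_antisymm hs ((Finset.subset_union_left).trans h1),
          subset_antisymm ht ((Finset.subset_union_left).trans h2)⟩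
  refine ⟨pa, pb, pc, pd, ?_⟩
  intro heq
  by_cases hG1 : G = g₁
  · by_cases hG2 : G = g₂
    · have h12 : g₁ = g₂ := hG1.symm.trans hG2
      rw [pd h12] at heq
      have hmem : X x * g₁ ∈ ({g₁} : Set (MvPolynomial (Fin n) (ZMod 2))) := by
        rw [← heq]; left; rfl
      rw [Set.mem_singleton_iff, hA, hg₁] at hmem
      obtain ⟨h, -⟩ := psm_inj hdA hd1 hmem
      exact h01 (h ▸ Finset.mem_insert_self x σ₁)
    · rw [pc ⟨hG1, fun h => hG2 (hG1.trans h)⟩] at heq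
      have hmem : X x * g₁ ∈ ({g₁, (1 - X x) * g₂} : Set (MvPolynomial (Fin n) (ZMod 2))) := by
        rw [← heq]; left; rfl
      rcases hmem with h | h
      · rw [hA, hg₁] at h
        obtain ⟨he, -⟩ := psm_inj hdA hd1 h
        exact h01 (he ▸ Finset.mem_insert_self x σ₁)
      · rw [Set.mem_singleton_iff, hA, hB] at h
        obtain ⟨he, -⟩ := psm_inj hdA hdB h
        exact h03 (he ▸ Finset.mem_insert_self x σ₁)
  · by_cases hG2 : G = g₂
    · rw [pb ⟨hG2, fun h => hG1 (hG2.trans h)⟩] at heq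
      have hmem : (1 - X x) * g₂ ∈ ({X x * g₁, g₂} : Set (MvPolynomial (Fin n) (ZMod 2))) := by
        rw [← heq]; right; rfl
      rcases hmem with h | h
      · rw [hA, hB] at h
        obtain ⟨-, he⟩ := psm_inj hdB hdA h
        exact h02 (he ▸ Finset.mem_insert_self x τ₂)
      · rw [Set.mem_singleton_iff, hB, hg₂] at h
        obtain ⟨-, he⟩ := psm_inj hdB hd2 h
        exact h04 (he ▸ Finset.mem_insert_self x τ₂)
    · rw [pa ⟨hG1, hG2⟩] at heq
      have hmem : G ∈ ({X x * g₁, (1 - X x) * g₂} : Set (MvPolynomial (Fin n) (ZMod 2))) := by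
        rw [heq]; right; right; rfl
      rcases hmem with h | h
      · rw [hG, hA] at h
        obtain ⟨he, -⟩ := psm_inj hdG hdA h
        rcases Finset.mem_union.mp (he ▸ Finset.mem_insert_self x σ₁ :
            x ∈ σ₁ ∪ σ₂) with hh | hh
        · exact h01 hh
        · exact h03 hh
      · rw [Set.mem_singleton_iff, hG, hB] at h
        obtain ⟨-, he⟩ := psm_inj hdG hdB h
        rcases Finset.mem_union.mp (he ▸ Finset.mem_insert_self x τ₂ :
            x ∈ τ₁ ∪ τ₂) with hh | hh
        · exact h02 hh
        · exact h04 hh
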